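/- arXiv:2604.17334 — 4 statements merged into one kernel-verified Lean document; each statement's English description precedes it below -/
import Mathlib

section
/- Let λ : [0,∞)×[−1,1] → ℝ be Lipschitz with λ(t,x) ≥ λ_m for a constant λ_m > 0. For every t ≥ 0 and x ∈ [−1,1] there exist a unique time t_b ∈ [0,t] and a unique C¹ curve X : [t_b, t] → [−1,1] such that X(t) = x, X′(τ) = λ(τ, X(τ)) for all τ ∈ [t_b, t], and either t_b = 0 or X(t_b) = −1. Moreover t_b = t if and only if x = −1 or t = 0. -/
open Set Metric Filter
open scoped NNReal Topology

/-! Extend `λ` from `[0,t] × [-1,1]` to a bounded, globally Lipschitz field that is still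
`≥ λ_m`. Picard–Lindelöf then gives a solution `Y` on all of `[0,t]` with `Y t = x`, unique by
Gronwall, and strictly increasing because its speed is positive. The exit time is `0` if
`Y 0 ≥ -1` and otherwise the unique time at which `Y` crosses `-1`; any admissible curve agrees
with `Y`, so strict monotonicity also pins down its starting time. -/

theorem LipschitzOnWith.exists_lipschitzWith_eqOn_mem_Icc {α : Type*} [PseudoMetricSpace α]
    {f : α → ℝ} {s : Set α} {K : ℝ≥0} (hf : LipschitzOnWith K f s) (hs : Bornology.IsBounded s)
    {m : ℝ} (hm : ∀ x ∈ s, m ≤ f x) :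
    ∃ g : α → ℝ, ∃ M : ℝ, LipschitzWith K g ∧ EqOn f g s ∧ ∀ x, g x ∈ Icc m M := by
  obtain ⟨g, hg, hfg⟩ := hf.extend_real
  obtain ⟨M, hM⟩ := (hg.isBounded_image hs).bddAbove
  refine ⟨fun x ↦ max (min (g x) (max M m)) m, max M m, (hg.min_const _).max_const m,
    fun x hx ↦ ?_, fun x ↦ ⟨le_max_right _ _, max_le (min_le_right _ _) (le_max_right _ _)⟩⟩
  have hgM : g x ≤ max M m := (hM (mem_image_of_mem g hx)).trans (le_max_left _ _)
  change f x = max (min (g x) (max M m)) m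
  rw [min_eq_left hgM, max_eq_left (hfg hx ▸ hm x hx), hfg hx]

theorem exists_hasDerivWithinAt_Icc_of_lipschitzWith {E : Type*} [NormedAddCommGroup E]
    [NormedSpace ℝ E] [CompleteSpace E] {v : ℝ → E → E} {K : ℝ≥0} {M a b : ℝ}
    (hv : ∀ t ∈ Icc a b, LipschitzWith K (v t)) (hcont : ∀ x, ContinuousOn (v · x) (Icc a b))
    (hM : ∀ t ∈ Icc a b, ∀ x, ‖v t x‖ ≤ M) {t₀ : ℝ} (ht₀ : t₀ ∈ Icc a b) (x₀ : E) :
    ∃ α : ℝ → E, α t₀ = x₀ ∧ ∀ t ∈ Icc a b, HasDerivWithinAt α (v t (α t)) (Icc a b) t := by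
  have hab : a ≤ b := ht₀.1.trans ht₀.2
  have hM₀ : 0 ≤ M := (norm_nonneg _).trans (hM a (left_mem_Icc.2 hab) x₀)
  have hPL : IsPicardLindelof v (⟨t₀, ht₀⟩ : Icc a b) x₀
      ⟨M * (b - a), mul_nonneg hM₀ (sub_nonneg.2 hab)⟩ 0 ⟨M, hM₀⟩ K :=
    { lipschitzOnWith := fun t ht ↦ (hv t ht).lipschitzOnWith
      continuousOn := fun x _ ↦ hcont x
      norm_le := fun t ht x _ ↦ hM t ht x
      mul_max_le := by
        simp only [NNReal.coe_zero, sub_zero]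
        exact mul_le_mul_of_nonneg_left
          (max_le (by linarith [ht₀.1]) (by linarith [ht₀.2])) hM₀ }
  exact hPL.exists_eq_forall_mem_Icc_hasDerivWithinAt₀

theorem eqOn_Icc_of_hasDerivWithinAt_of_eq_right {E : Type*} [NormedAddCommGroup E]
    [NormedSpace ℝ E] {v : ℝ → E → E} {s : ℝ → Set E} {K : ℝ≥0} {f g : ℝ → E} {a b : ℝ}
    (hv : ∀ t ∈ Ioc a b, LipschitzOnWith K (v t) (s t))
    (hf : ∀ t ∈ Icc a b, HasDerivWithinAt f (v t (f t)) (Icc a b) t)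
    (hfs : ∀ t ∈ Ioc a b, f t ∈ s t)
    (hg : ∀ t ∈ Icc a b, HasDerivWithinAt g (v t (g t)) (Icc a b) t)
    (hgs : ∀ t ∈ Ioc a b, g t ∈ s t) (hb : f b = g b) :
    EqOn f g (Icc a b) := by
  have hnhds : ∀ t ∈ Ioc a b, Icc a b ∈ 𝓝[≤] t := fun t ht ↦
    mem_of_superset (Icc_mem_nhdsLE ht.1) (Icc_subset_Icc_right ht.2)
  exact ODE_solution_unique_of_mem_Icc_left hv
    (fun t ht ↦ (hf t ht).continuousWithinAt)
    (fun t ht ↦ (hf t (Ioc_subset_Icc_self ht)).mono_of_mem_nhdsWithin (hnhds t ht)) hfs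
    (fun t ht ↦ (hg t ht).continuousWithinAt)
    (fun t ht ↦ (hg t (Ioc_subset_Icc_self ht)).mono_of_mem_nhdsWithin (hnhds t ht)) hgs hb

theorem strictMonoOn_Icc_of_hasDerivWithinAt_pos {f f' : ℝ → ℝ} {a b : ℝ}
    (hf : ∀ t ∈ Icc a b, HasDerivWithinAt f (f' t) (Icc a b) t)
    (hf' : ∀ t ∈ Icc a b, 0 < f' t) : StrictMonoOn f (Icc a b) := by
  refine strictMonoOn_of_hasDerivWithinAt_pos (convex_Icc a b)
    (fun t ht ↦ (hf t ht).continuousWithinAt) (fun t ht ↦ ?_)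
    (fun t ht ↦ hf' t (interior_subset ht))
  rw [interior_Icc] at ht ⊢
  exact ((hf t (Ioo_subset_Icc_self ht)).hasDerivAt (Icc_mem_nhds ht.1 ht.2)).hasDerivWithinAt

theorem StrictMonoOn.existsUnique_hittingTime {f : ℝ → ℝ} {a b c : ℝ} (hab : a ≤ b)
    (hf : StrictMonoOn f (Icc a b)) (hfc : ContinuousOn f (Icc a b)) (hc : c ≤ f b) :
    ∃! s, s ∈ Icc a b ∧ (s = a ∨ f s = c) ∧ c ≤ f s := by
  by_cases hca : c ≤ f a
  · refine ⟨a, ⟨left_mem_Icc.2 hab, Or.inl rfl, hca⟩, ?_⟩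
    rintro s ⟨hs, rfl | hsc, -⟩
    · rfl
    · exact le_antisymm (hf.le_iff_le hs (left_mem_Icc.2 hab) |>.1 (hsc.trans_le hca)) hs.1
  · obtain ⟨s, hs, hsc⟩ := intermediate_value_Icc hab hfc ⟨(not_le.1 hca).le, hc⟩
    refine ⟨s, ⟨hs, Or.inr hsc, hsc.ge⟩, ?_⟩
    rintro s' ⟨hs', rfl | hs'c, hcs'⟩
    · exact absurd hcs' hca
    · exact hf.injOn hs' hs (hs'c.trans hsc.symm)

/-- (Backward exit time.) Let `λ` be Lipschitz on `[0,∞)×[−1,1]` with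
`λ ≥ λ_m > 0`. For every `t ≥ 0` and `x ∈ [−1,1]` there exist a unique time
`t_b ∈ [0,t]` and a unique `C¹` curve `X : [t_b,t] → [−1,1]` with `X(t) = x`,
`X′(τ) = λ(τ, X(τ))` on `[t_b,t]`, and either `t_b = 0` or `X(t_b) = −1`.
Moreover `t_b = t` if and only if `x = −1` or `t = 0`. -/
theorem stmt1 (lm : ℝ) (hlm : 0 < lm) (lam : ℝ → ℝ → ℝ) (K : NNReal)
    (hlip : LipschitzOnWith K (fun p : ℝ × ℝ => lam p.1 p.2)
      (Set.Ici (0 : ℝ) ×ˢ Set.Icc (-1 : ℝ) 1))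
    (hlow : ∀ t ∈ Set.Ici (0 : ℝ), ∀ x ∈ Set.Icc (-1 : ℝ) 1, lm ≤ lam t x) :
    ∀ t ∈ Set.Ici (0 : ℝ), ∀ x ∈ Set.Icc (-1 : ℝ) 1,
      ∃ tb : ℝ, ∃ X : ℝ → ℝ,
        tb ∈ Set.Icc 0 t ∧
        (∀ τ ∈ Set.Icc tb t, X τ ∈ Set.Icc (-1 : ℝ) 1 ∧
          HasDerivWithinAt X (lam τ (X τ)) (Set.Icc tb t) τ) ∧
        X t = x ∧
        (tb = 0 ∨ X tb = -1) ∧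
        (tb = t ↔ (x = -1 ∨ t = 0)) ∧
        (∀ tb' : ℝ, ∀ X' : ℝ → ℝ,
          tb' ∈ Set.Icc 0 t →
          (∀ τ ∈ Set.Icc tb' t, X' τ ∈ Set.Icc (-1 : ℝ) 1 ∧
            HasDerivWithinAt X' (lam τ (X' τ)) (Set.Icc tb' t) τ) →
          X' t = x →
          (tb' = 0 ∨ X' tb' = -1) →
          tb' = tb ∧ ∀ τ ∈ Set.Icc tb t, X' τ = X τ) := by
  intro t ht x hx
  have hbox : Icc 0 t ×ˢ Icc (-1 : ℝ) 1 ⊆ Ici 0 ×ˢ Icc (-1) 1 :=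
    prod_mono Icc_subset_Ici_self subset_rfl
  obtain ⟨L, M, hL, hLlam, hLbd⟩ := (hlip.mono hbox).exists_lipschitzWith_eqOn_mem_Icc
    ((isBounded_Icc 0 t).prod (isBounded_Icc (-1) 1)) fun p hp ↦ hlow _ (hbox hp).1 _ hp.2
  have hLeq : ∀ τ ∈ Icc 0 t, ∀ y ∈ Icc (-1 : ℝ) 1, L (τ, y) = lam τ y := fun τ hτ y hy ↦
    (hLlam (mk_mem_prod hτ hy)).symm
  have hLτ : ∀ τ, LipschitzWith K fun y ↦ L (τ, y) := fun τ ↦ by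
    simpa [Function.comp_def] using hL.comp (LipschitzWith.prodMk_left τ)
  obtain ⟨Y, hYt, hY⟩ := exists_hasDerivWithinAt_Icc_of_lipschitzWith (v := fun τ y ↦ L (τ, y))
    (fun τ _ ↦ hLτ τ) (fun y ↦ (hL.continuous.comp (Continuous.prodMk_left y)).continuousOn)
    (fun τ _ y ↦ abs_le.2 ⟨by linarith [(hLbd (τ, y)).1, (hLbd (τ, y)).2], (hLbd (τ, y)).2⟩) (right_mem_Icc.2 ht) x
  have hmono : StrictMonoOn Y (Icc 0 t) :=
    strictMonoOn_Icc_of_hasDerivWithinAt_pos hY fun τ _ ↦ hlm.trans_le (hLbd _).1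
  obtain ⟨tb, ⟨htb, hexit, hYtb⟩, htb_unique⟩ := hmono.existsUnique_hittingTime ht
    (fun τ hτ ↦ (hY τ hτ).continuousWithinAt) (hYt ▸ hx.1 : -1 ≤ Y t)
  have hsub : Icc tb t ⊆ Icc 0 t := Icc_subset_Icc_left htb.1
  have hYmem : ∀ τ ∈ Icc tb t, Y τ ∈ Icc (-1 : ℝ) 1 := fun τ hτ ↦
    ⟨hYtb.trans (hmono.monotoneOn (hsub (left_mem_Icc.2 htb.2)) (hsub hτ) hτ.1),
      (hmono.monotoneOn (hsub hτ) (right_mem_Icc.2 ht) hτ.2).trans (hYt ▸ hx.2)⟩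
  refine ⟨tb, Y, htb, fun τ hτ ↦ ⟨hYmem τ hτ, ?_⟩, hYt, hexit, ⟨?_, ?_⟩, ?_⟩
  · rw [← hLeq τ (hsub hτ) _ (hYmem τ hτ)]
    exact (hY τ (hsub hτ)).mono hsub
  · rintro rfl
    rcases hexit with h | h
    · exact Or.inr h
    · exact Or.inl (hYt ▸ h)
  · rintro (rfl | rfl)
    · refine le_antisymm htb.2 (not_lt.1 fun h ↦ ?_)
      exact (hmono (hsub (left_mem_Icc.2 htb.2)) (right_mem_Icc.2 ht) h).not_ge (hYt ▸ hYtb)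
    · exact le_antisymm htb.2 htb.1
  · intro tb' X' htb' hX' hX't hexit'
    have hsub' : Icc tb' t ⊆ Icc 0 t := Icc_subset_Icc_left htb'.1
    have heq : EqOn X' Y (Icc tb' t) :=
      eqOn_Icc_of_hasDerivWithinAt_of_eq_right (v := fun τ y ↦ L (τ, y)) (s := fun _ ↦ univ)
        (fun τ _ ↦ (hLτ τ).lipschitzOnWith)
        (fun τ hτ ↦ by rw [hLeq τ (hsub' hτ) _ (hX' τ hτ).1]; exact (hX' τ hτ).2)
        (fun _ _ ↦ mem_univ _) (fun τ hτ ↦ (hY τ (hsub' hτ)).mono hsub')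
        (fun _ _ ↦ mem_univ _) (hX't.trans hYt.symm)
    have hX'Y := heq (left_mem_Icc.2 htb'.2)
    obtain rfl : tb' = tb := htb_unique tb'
      ⟨htb', hX'Y ▸ hexit', hX'Y ▸ (hX' tb' (left_mem_Icc.2 htb'.2)).1.1⟩
    exact ⟨rfl, heq⟩
end

section
/- Let λ_m > 0, α > 0, and set w(x) = e^{−αx}. Let λ : [0,∞)×[−1,1] → ℝ be Lipschitz with λ(t,x) ≥ λ_m, and let f : [0,∞)×[−1,1] → ℝ be a bounded C¹ function; set h = ∂_t f + λ ∂_x f. Then for every t ≥ 0 and x ∈ [−1,1]: w(x)|f(t,x)| ≤ max( sup_{y∈[−1,1]} w(y)|f(0,y)| , sup_{0≤s≤t} w(−1)|f(s,−1)| ) + (1/(α λ_m)) sup_{0≤s≤t, y∈[−1,1]} w(y)|h(s,y)|. -/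
/-!
A maximum principle. Write `w x = exp (-α x)` and `U = w |f|`. If `U` ever exceeded the barrier
`A + H / (α λ_m) + ε (1 + s)`, take the first time `s₀` at which it reaches it and a point `x₀`
where `U (s₀, ·)` is maximal. The barrier exceeds the initial and inflow data, so `s₀ > 0` and
`x₀ > -1`; with `σ` the sign of `f (s₀, x₀)`, the minorant `σ w f` of `U` then has
`∂ₜ (σ w f) ≥ ε` and `∂ₓ (σ w f) ≥ 0` at `(s₀, x₀)`, both read off from the left. As `w' = -α w`,
this gives `w |h| ≥ ε + α λ U ≥ ε + α λ_m U > H`, a contradiction. Finally let `ε → 0`.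
-/

open Set Real

theorem HasDerivAt.le_of_sub_le_mul_sub_left {φ : ℝ → ℝ} {a c ε v : ℝ} (hc : c < a)
    (hφ : HasDerivAt φ v a) (h : ∀ s ∈ Ioo c a, φ s - φ a ≤ ε * (s - a)) : ε ≤ v := by
  have hslope : Filter.Tendsto (slope φ a) (nhdsWithin a (Iio a)) (nhds v) :=
    (hasDerivAt_iff_tendsto_slope.mp hφ).mono_left (nhdsWithin_mono a fun _ hs => ne_of_lt hs)
  refine ge_of_tendsto hslope ?_
  filter_upwards [Ioo_mem_nhdsLT hc] with s hs
  rw [slope_def_field, le_div_iff_of_neg (sub_neg.mpr hs.2)]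
  exact h s hs

theorem sign_mul_le_abs (a z : ℝ) : (SignType.sign a : ℝ) * z ≤ |z| := by
  rcases lt_trichotomy a 0 with h | h | h <;> simp [h, neg_le_abs, le_abs_self]

section PartialDeriv

variable {E : Type*} [NormedAddCommGroup E] [NormedSpace ℝ E] {f : ℝ → ℝ → E}

theorem hasDerivAt_fderiv_apply_fst (hf : Differentiable ℝ fun p : ℝ × ℝ => f p.1 p.2)
    (s y : ℝ) :
    HasDerivAt (fun u => f u y) (fderiv ℝ (fun p : ℝ × ℝ => f p.1 p.2) (s, y) (1, 0)) s :=
  (hf (s, y)).hasFDerivAt.comp_hasDerivAt (f := fun u => (u, y)) s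
    ((hasDerivAt_id' s).prodMk (hasDerivAt_const s y))

theorem hasDerivAt_fderiv_apply_snd (hf : Differentiable ℝ fun p : ℝ × ℝ => f p.1 p.2)
    (s y : ℝ) :
    HasDerivAt (fun z => f s z) (fderiv ℝ (fun p : ℝ × ℝ => f p.1 p.2) (s, y) (0, 1)) y :=
  (hf (s, y)).hasFDerivAt.comp_hasDerivAt (f := fun z => (s, z)) y
    ((hasDerivAt_const y s).prodMk (hasDerivAt_id' y))

theorem continuous_deriv_fst (hf : ContDiff ℝ 1 fun p : ℝ × ℝ => f p.1 p.2) :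
    Continuous fun p : ℝ × ℝ => deriv (fun u => f u p.2) p.1 := by
  simp_rw [fun p : ℝ × ℝ =>
    (hasDerivAt_fderiv_apply_fst (hf.differentiable one_ne_zero) p.1 p.2).deriv]
  exact (hf.continuous_fderiv one_ne_zero).clm_apply continuous_const

theorem continuous_deriv_snd (hf : ContDiff ℝ 1 fun p : ℝ × ℝ => f p.1 p.2) :
    Continuous fun p : ℝ × ℝ => deriv (fun z => f p.1 z) p.2 := by
  simp_rw [fun p : ℝ × ℝ =>
    (hasDerivAt_fderiv_apply_snd (hf.differentiable one_ne_zero) p.1 p.2).deriv]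
  exact (hf.continuous_fderiv one_ne_zero).clm_apply continuous_const

end PartialDeriv

theorem exists_first_time_isMaxOn {X : Type*} [TopologicalSpace X] {K : Set X} (hK : IsCompact K)
    {U : ℝ × X → ℝ} (hU : Continuous U) {g : ℝ → ℝ} (hg : Continuous g) {a t : ℝ} {x : X}
    (hat : a ≤ t) (hx : x ∈ K) (hgx : g t ≤ U (t, x)) :
    ∃ s₀ ∈ Icc a t, ∃ x₀ ∈ K, g s₀ ≤ U (s₀, x₀) ∧
      (∀ s ∈ Ico a s₀, ∀ y ∈ K, U (s, y) < g s) ∧ ∀ y ∈ K, U (s₀, y) ≤ U (s₀, x₀) := by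
  set T := (Icc a t ×ˢ K) ∩ {p | g p.1 ≤ U p}
  have hT : IsCompact T := (isCompact_Icc.prod hK).inter_right (isClosed_le (by fun_prop) hU)
  obtain ⟨⟨s₀, y₀⟩, ⟨⟨hs₀, hy₀⟩, hgy₀⟩, hfirst⟩ :=
    hT.exists_isMinOn ⟨(t, x), ⟨⟨⟨hat, le_rfl⟩, hx⟩, hgx⟩⟩ continuous_fst.continuousOn
  obtain ⟨x₀, hx₀, hmax⟩ := hK.exists_isMaxOn ⟨y₀, hy₀⟩
    (hU.comp (continuous_const.prodMk continuous_id)).continuousOn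
  refine ⟨s₀, hs₀, x₀, hx₀, hgy₀.trans (hmax hy₀), fun s hs y hy => ?_, fun y hy => hmax hy⟩
  by_contra! hle
  exact hs.2.not_ge (hfirst (a := (s, y)) ⟨⟨⟨hs.1, hs.2.le.trans hs₀.2⟩, hy⟩, hle⟩)

section Transport

variable {f lam : ℝ → ℝ → ℝ} {α ε s₀ x₀ c d : ℝ}

theorem le_weighted_abs_transport_of_left_max (hf : Differentiable ℝ fun p : ℝ × ℝ => f p.1 p.2)
    (hlam : 0 ≤ lam s₀ x₀) (hc : c < s₀) (hd : d < x₀)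
    (htime : ∀ s ∈ Ioo c s₀,
      exp (-α * x₀) * |f s x₀| - exp (-α * x₀) * |f s₀ x₀| ≤ ε * (s - s₀))
    (hspace : ∀ y ∈ Ioo d x₀, exp (-α * y) * |f s₀ y| ≤ exp (-α * x₀) * |f s₀ x₀|) :
    ε + α * lam s₀ x₀ * (exp (-α * x₀) * |f s₀ x₀|) ≤
      exp (-α * x₀) * |deriv (fun s => f s x₀) s₀ + lam s₀ x₀ * deriv (fun y => f s₀ y) x₀| := by
  set σ : ℝ := (SignType.sign (f s₀ x₀) : ℝ)
  set e := exp (-α * x₀)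
  set d₁ := deriv (fun s => f s x₀) s₀
  set d₂ := deriv (fun y => f s₀ y) x₀
  have hσ : ∀ {w : ℝ}, 0 ≤ w → ∀ z, σ * (w * z) ≤ w * |z| := fun hw z => by
    rw [mul_left_comm]; exact mul_le_mul_of_nonneg_left (sign_mul_le_abs _ _) hw
  have hσ₀ : σ * (e * f s₀ x₀) = e * |f s₀ x₀| := by rw [mul_left_comm, sign_mul_self]
  have hd₁ : HasDerivAt (fun s => f s x₀) d₁ s₀ :=
    (hasDerivAt_fderiv_apply_fst hf s₀ x₀).differentiableAt.hasDerivAt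
  have hd₂ : HasDerivAt (fun y => f s₀ y) d₂ x₀ :=
    (hasDerivAt_fderiv_apply_snd hf s₀ x₀).differentiableAt.hasDerivAt
  have htime' : ε ≤ σ * (e * d₁) :=
    ((hd₁.const_mul e).const_mul σ).le_of_sub_le_mul_sub_left hc fun s hs => by
      linarith [hσ (exp_pos (-α * x₀)).le (f s x₀), htime s hs]
  have hspace' : α * (e * |f s₀ x₀|) ≤ σ * (e * d₂) := by
    have hweighted := (((hasDerivAt_id' x₀).const_mul (-α)).exp.mul hd₂).const_mul σ
    have := hweighted.le_of_sub_le_mul_sub_left (ε := 0) hd fun y hy => by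
        simp only [Pi.mul_apply, zero_mul]
        linarith [hσ (exp_pos (-α * y)).le (f s₀ y), hspace y hy]
    linear_combination this - α * hσ₀
  calc ε + α * lam s₀ x₀ * (e * |f s₀ x₀|) ≤ σ * (e * d₁) + lam s₀ x₀ * (σ * (e * d₂)) := by
        linarith [mul_le_mul_of_nonneg_left hspace' hlam]
    _ = σ * (e * (d₁ + lam s₀ x₀ * d₂)) := by ring
    _ ≤ e * |d₁ + lam s₀ x₀ * d₂| := hσ (exp_pos _).le _

variable {lm A H t x : ℝ}

theorem exp_mul_abs_le_of_bounds (hlm : 0 < lm) (hα : 0 < α)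
    (hlow : ∀ s ∈ Icc 0 t, ∀ y ∈ Icc (-1 : ℝ) 1, lm ≤ lam s y)
    (hf : Differentiable ℝ fun p : ℝ × ℝ => f p.1 p.2)
    (hinit : ∀ y ∈ Icc (-1 : ℝ) 1, exp (-α * y) * |f 0 y| ≤ A)
    (hinflow : ∀ s ∈ Icc 0 t, exp (-α * (-1)) * |f s (-1)| ≤ A)
    (hsource : ∀ s ∈ Icc 0 t, ∀ y ∈ Icc (-1 : ℝ) 1,
      exp (-α * y) * |deriv (fun s => f s y) s + lam s y * deriv (fun y => f s y) y| ≤ H)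
    (ht : 0 ≤ t) (hx : x ∈ Icc (-1 : ℝ) 1) :
    exp (-α * x) * |f t x| ≤ A + H / (α * lm) := by
  refine le_of_forall_pos_lt_add fun δ hδ => ?_
  by_contra! hge
  set ε := δ / (1 + t)
  have hε : 0 < ε := by positivity
  have hεt : ε * (1 + t) = δ := div_mul_cancel₀ δ (by positivity)
  obtain ⟨s₀, hs₀, x₀, hx₀, hhit, hbefore, hmax⟩ :=
    exists_first_time_isMaxOn isCompact_Icc (U := fun p => exp (-α * p.2) * |f p.1 p.2|)
      (by have := hf.continuous; fun_prop) (g := fun s => A + H / (α * lm) + ε * (1 + s))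
      (by fun_prop) ht hx (by rwa [hεt])
  simp only at hhit hbefore hmax
  have hA : 0 ≤ A := (by positivity : 0 ≤ exp (-α * x) * |f 0 x|).trans (hinit x hx)
  have hH : 0 ≤ H := (by positivity : 0 ≤ exp (-α * x₀) * |_|).trans (hsource s₀ hs₀ x₀ hx₀)
  have hHlm : 0 ≤ H / (α * lm) := by positivity
  have hslack : 0 < ε * (1 + s₀) := mul_pos hε (by linarith [hs₀.1])
  have hs₀pos : 0 < s₀ := hs₀.1.lt_of_ne fun h => by
    subst h; linarith [hinit x₀ hx₀]
  have hx₀pos : -1 < x₀ := hx₀.1.lt_of_ne fun h => by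
    subst h; linarith [hinflow s₀ hs₀]
  have hlam := hlow s₀ hs₀ x₀ hx₀
  have hgrowth := le_weighted_abs_transport_of_left_max (ε := ε) hf (hlm.le.trans hlam)
    hs₀pos hx₀pos (fun s hs => by linarith [hbefore s ⟨hs.1.le, hs.2⟩ x₀ hx₀])
    fun y hy => hmax y ⟨hy.1.le, hy.2.le.trans hx₀.2⟩
  have hHU : H ≤ α * lm * (exp (-α * x₀) * |f s₀ x₀|) :=
    (div_le_iff₀' (by positivity)).mp (by linarith)
  have hlmU : α * lm * (exp (-α * x₀) * |f s₀ x₀|) ≤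
      α * lam s₀ x₀ * (exp (-α * x₀) * |f s₀ x₀|) := by
    gcongr
  linarith [hsource s₀ hs₀ x₀ hx₀]

end Transport

theorem stmt5_general (lm α : ℝ) (hlm : 0 < lm) (hα : 0 < α) (lam f : ℝ → ℝ → ℝ) (K : NNReal)
    (hlip : LipschitzOnWith K (fun p : ℝ × ℝ => lam p.1 p.2)
      (Set.Ici (0 : ℝ) ×ˢ Set.Icc (-1 : ℝ) 1))
    (hlow : ∀ t ∈ Set.Ici (0 : ℝ), ∀ x ∈ Set.Icc (-1 : ℝ) 1, lm ≤ lam t x)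
    (hf : ContDiff ℝ 1 (fun p : ℝ × ℝ => f p.1 p.2)) :
    ∀ t ∈ Set.Ici (0 : ℝ), ∀ x ∈ Set.Icc (-1 : ℝ) 1,
      Real.exp (-α * x) * |f t x| ≤
        max (⨆ y : Set.Icc (-1 : ℝ) 1, Real.exp (-α * (y : ℝ)) * |f 0 y|)
            (⨆ s : Set.Icc (0 : ℝ) t, Real.exp (-α * (-1 : ℝ)) * |f (s : ℝ) (-1)|)
        + (1 / (α * lm)) *
            ⨆ q : Set.Icc (0 : ℝ) t × Set.Icc (-1 : ℝ) 1,
              Real.exp (-α * (q.2 : ℝ)) *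
                |deriv (fun s => f s (q.2 : ℝ)) (q.1 : ℝ)
                  + lam (q.1 : ℝ) (q.2 : ℝ) * deriv (fun y => f (q.1 : ℝ) y) (q.2 : ℝ)| := by
  intro t ht x hx
  have hfc := hf.continuous
  have hlamc : ContinuousOn (fun p : ℝ × ℝ => lam p.1 p.2) (Icc 0 t ×ˢ Icc (-1) 1) :=
    hlip.continuousOn.mono (prod_mono Icc_subset_Ici_self le_rfl)
  have hinit : BddAbove (range fun y : Icc (-1 : ℝ) 1 => exp (-α * y) * |f 0 y|) :=
    (isCompact_range (by fun_prop)).bddAbove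
  have hinflow : BddAbove (range fun s : Icc (0 : ℝ) t => exp (-α * (-1)) * |f s (-1)|) :=
    (isCompact_range (by fun_prop)).bddAbove
  have hsource : BddAbove (range fun q : Icc (0 : ℝ) t × Icc (-1 : ℝ) 1 =>
      exp (-α * q.2) *
        |deriv (fun s => f s q.2) q.1 + lam q.1 q.2 * deriv (fun y => f q.1 y) q.2|) := by
    have hval : Continuous fun q : Icc (0 : ℝ) t × Icc (-1 : ℝ) 1 => ((q.1 : ℝ), (q.2 : ℝ)) := by
      fun_prop
    have hweight : Continuous fun q : Icc (0 : ℝ) t × Icc (-1 : ℝ) 1 => exp (-α * q.2) := by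
      fun_prop
    exact (isCompact_range (hweight.mul (((continuous_deriv_fst hf).comp hval).add
      ((hlamc.comp_continuous hval fun q => ⟨q.1.2, q.2.2⟩).mul
        ((continuous_deriv_snd hf).comp hval))).abs)).bddAbove
  rw [one_div_mul_eq_div]
  exact exp_mul_abs_le_of_bounds hlm hα (fun s hs y hy => hlow s hs.1 y hy)
    (hf.differentiable one_ne_zero)
    (fun y hy => (le_ciSup hinit ⟨y, hy⟩).trans (le_max_left _ _))
    (fun s hs => (le_ciSup hinflow ⟨s, hs⟩).trans (le_max_right _ _))
    (fun s hs y hy => le_ciSup hsource (⟨s, hs⟩, ⟨y, hy⟩)) ht hx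

/-- Weighted `L^∞` estimate for the transport inflow problem on
`I = (−1,1)` with inflow boundary `{−1}`: for `λ ≥ λ_m > 0` Lipschitz, `w(x) = e^{−αx}`,
`f` bounded `C¹` and `h = ∂_t f + λ ∂_x f`, one has for all `t ≥ 0`, `x ∈ [−1,1]`:
`w(x)|f(t,x)| ≤ max(sup_y w(y)|f(0,y)|, sup_{0≤s≤t} w(−1)|f(s,−1)|)
  + (1/(αλ_m)) · sup_{0≤s≤t, y} w(y)|h(s,y)|`. -/
theorem stmt5 (lm α : ℝ) (hlm : 0 < lm) (hα : 0 < α) (lam f : ℝ → ℝ → ℝ) (K : NNReal)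
    (hlip : LipschitzOnWith K (fun p : ℝ × ℝ => lam p.1 p.2)
      (Set.Ici (0 : ℝ) ×ˢ Set.Icc (-1 : ℝ) 1))
    (hlow : ∀ t ∈ Set.Ici (0 : ℝ), ∀ x ∈ Set.Icc (-1 : ℝ) 1, lm ≤ lam t x)
    (hf : ContDiff ℝ 1 (fun p : ℝ × ℝ => f p.1 p.2))
    (hbdd : ∃ M : ℝ, ∀ t ∈ Set.Ici (0 : ℝ), ∀ x ∈ Set.Icc (-1 : ℝ) 1, |f t x| ≤ M) :
    ∀ t ∈ Set.Ici (0 : ℝ), ∀ x ∈ Set.Icc (-1 : ℝ) 1,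
      Real.exp (-α * x) * |f t x| ≤
        max (⨆ y : Set.Icc (-1 : ℝ) 1, Real.exp (-α * (y : ℝ)) * |f 0 y|)
            (⨆ s : Set.Icc (0 : ℝ) t, Real.exp (-α * (-1 : ℝ)) * |f (s : ℝ) (-1)|)
        + (1 / (α * lm)) *
            ⨆ q : Set.Icc (0 : ℝ) t × Set.Icc (-1 : ℝ) 1,
              Real.exp (-α * (q.2 : ℝ)) *
                |deriv (fun s => f s (q.2 : ℝ)) (q.1 : ℝ)
                  + lam (q.1 : ℝ) (q.2 : ℝ) * deriv (fun y => f (q.1 : ℝ) y) (q.2 : ℝ)| :=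
  stmt5_general lm α hlm hα lam f K hlip hlow hf
end

section
/- Let λ_m > 0 and let λ : [0,∞)×[−1,1] → ℝ be Lipschitz with λ(t,x) ≥ λ_m and with M := sup_{t,x} |∂_t λ(t,x)/λ(t,x)| < ∞. Set α = (2M + 2)/λ_m and w(x) = e^{−αx}. Let f : [0,∞)×[−1,1] → ℝ be C² with bounded first and second derivatives, and set h = ∂_t f + λ ∂_x f, assumed bounded together with ∂_t h. Then there is a constant C (independent of f, λ, h) such that sup_{t≥0, x∈[−1,1]} w(x)|∂_t f(t,x)| ≤ C ( sup_{x} w(x)|∂_t f(0,x)| + sup_{t} w(−1)|∂_t f(t,−1)| + sup_{t,x} w(x)|h(t,x)| + sup_{t,x} w(x)|∂_t h(t,x)| ). -/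
/-!
Along a backward characteristic `X' = λ(s, X)` ending at `(t, x)`, differentiating the equation in
`t` shows that `u = e^{-αX} ∂_t f(s, X)` solves
`u' = -(αλ - ∂_tλ/λ) u + e^{-αX} (∂_t h - (∂_tλ/λ) h)`.
Since `αλ ≥ α λ_m = 2M + 2` and `|∂_tλ/λ| ≤ M`, the damping rate is at least `M + 2`, so `|u(t)|` is
at most the larger of its value where the characteristic enters the domain (at time `0` or on the
inflow boundary `x = -1`) and `(sup w|∂_t h| + M sup w|h|) / (M + 2) ≤ sup w|h| + sup w|∂_t h|`.
-/

open Set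

theorem le_max_of_hasDerivWithinAt_damped {u c r : ℝ → ℝ} {a b κ B : ℝ} (hab : a ≤ b)
    (hκ : 0 < κ) (hu : ContinuousOn u (Icc a b))
    (hu' : ∀ s ∈ Ico a b, HasDerivWithinAt u (-c s * u s + r s) (Ici s) s)
    (hc : ∀ s ∈ Ico a b, κ ≤ c s) (hr : ∀ s ∈ Ico a b, |r s| ≤ B) :
    u b ≤ max (u a) (B / κ) := by
  -- `u` can only reach the barrier `max + ε` while it is decreasing.
  refine le_of_forall_pos_le_add fun ε hε => ?_
  refine image_le_of_deriv_right_lt_deriv_boundary' hu hu' (by linarith [le_max_left (u a) (B / κ)])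
    continuousOn_const (fun _ _ => hasDerivWithinAt_const _ _ _) ?_ (right_mem_Icc.2 hab)
  intro s hs hus
  have hB : B / κ < u s := by linarith [le_max_right (u a) (B / κ)]
  have hκu : B < κ * u s := by rwa [div_lt_iff₀' hκ] at hB
  have hupos : 0 < u s := lt_of_le_of_lt (div_nonneg ((abs_nonneg _).trans (hr s hs)) hκ.le) hB
  nlinarith [(abs_le.1 (hr s hs)).2, hc s hs]

theorem abs_le_max_of_hasDerivWithinAt_damped {u c r : ℝ → ℝ} {a b κ B : ℝ} (hab : a ≤ b)
    (hκ : 0 < κ) (hu : ContinuousOn u (Icc a b))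
    (hu' : ∀ s ∈ Ico a b, HasDerivWithinAt u (-c s * u s + r s) (Ici s) s)
    (hc : ∀ s ∈ Ico a b, κ ≤ c s) (hr : ∀ s ∈ Ico a b, |r s| ≤ B) :
    |u b| ≤ max |u a| (B / κ) := by
  have hneg : ∀ s ∈ Ico a b, HasDerivWithinAt (-u) (-c s * (-u) s + (-r) s) (Ici s) s :=
    fun s hs => (hu' s hs).neg.congr_deriv (by simp only [Pi.neg_apply]; ring)
  have hup := le_max_of_hasDerivWithinAt_damped hab hκ hu hu' hc hr
  have hlow := le_max_of_hasDerivWithinAt_damped hab hκ hu.neg hneg hc (by simpa using hr)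
  rw [abs_le']
  constructor
  · exact hup.trans (max_le_max_right _ (le_abs_self _))
  · exact hlow.trans (max_le_max_right _ (neg_le_abs _))

theorem HasDerivWithinAt.fderiv_apply {E : Type*} [NormedAddCommGroup E] [NormedSpace ℝ E]
    {F : E → ℝ} {γ : ℝ → E} {γ' : E} {S : Set ℝ} {s : ℝ}
    (hγ : HasDerivWithinAt γ γ' S s) (hF : DifferentiableAt ℝ (fderiv ℝ F) (γ s)) (w : E) :
    HasDerivWithinAt (fun τ => fderiv ℝ F (γ τ) w) (fderiv ℝ (fderiv ℝ F) (γ s) γ' w) S s := by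
  simpa using (hF.hasFDerivAt.comp_hasDerivWithinAt s hγ).clm_apply (hasDerivWithinAt_const s S w)

theorem hasDerivAt_slice_fst {F : ℝ × ℝ → ℝ} {t x : ℝ} (hF : DifferentiableAt ℝ F (t, x)) :
    HasDerivAt (fun s => F (s, x)) (fderiv ℝ F (t, x) (1, 0)) t :=
  hF.hasFDerivAt.comp_hasDerivAt t ((hasDerivAt_id t).prodMk (hasDerivAt_const t x))

theorem hasDerivAt_slice_snd {F : ℝ × ℝ → ℝ} {t x : ℝ} (hF : DifferentiableAt ℝ F (t, x)) :
    HasDerivAt (fun y => F (t, y)) (fderiv ℝ F (t, x) (0, 1)) x :=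
  hF.hasFDerivAt.comp_hasDerivAt x ((hasDerivAt_const x t).prodMk (hasDerivAt_id x))

theorem hasDerivWithinAt_deriv_along_characteristic {f lam h : ℝ → ℝ → ℝ} {X : ℝ → ℝ}
    {S : Set ℝ} {s : ℝ} (hf : ContDiff ℝ 2 (fun p : ℝ × ℝ => f p.1 p.2))
    (hh : ∀ t x, h t x = deriv (fun s => f s x) t + lam t x * deriv (fun y => f t y) x)
    (hlam : DifferentiableAt ℝ (fun τ => lam τ (X s)) s)
    (hX : HasDerivWithinAt X (lam s (X s)) S s) :
    HasDerivWithinAt (fun τ => deriv (fun σ => f σ (X τ)) τ)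
      (deriv (fun τ => h τ (X s)) s -
        deriv (fun τ => lam τ (X s)) s * deriv (fun y => f s y) (X s)) S s := by
  set F : ℝ × ℝ → ℝ := fun p => f p.1 p.2
  have hF : Differentiable ℝ F := hf.differentiable (by norm_num)
  have hDF : Differentiable ℝ (fderiv ℝ F) :=
    (hf.fderiv_right (m := 1) (by norm_num)).differentiable (by norm_num)
  have hfst : ∀ τ y, deriv (fun σ => f σ y) τ = fderiv ℝ F (τ, y) (1, 0) :=
    fun τ y => (hasDerivAt_slice_fst (hF (τ, y))).deriv
  have hsnd : ∀ τ y, deriv (fun z => f τ z) y = fderiv ℝ F (τ, y) (0, 1) :=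
    fun τ y => (hasDerivAt_slice_snd (hF (τ, y))).deriv
  set y := X s
  set D2 := fderiv ℝ (fderiv ℝ F) (s, y)
  have hsymm : D2 (0, 1) (1, 0) = D2 (1, 0) (0, 1) :=
    hf.contDiffAt.isSymmSndFDerivAt (by simp) _ _
  have hslice : HasDerivWithinAt (fun τ => (τ, y)) ((1 : ℝ), (0 : ℝ)) univ s :=
    ((hasDerivAt_id s).prodMk (hasDerivAt_const s y)).hasDerivWithinAt
  have hht : deriv (fun τ => h τ y) s = D2 (1, 0) (1, 0) +
      (deriv (fun τ => lam τ y) s * fderiv ℝ F (s, y) (0, 1) + lam s y * D2 (1, 0) (0, 1)) := by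
    have hhF : (fun τ => h τ y) =
        fun τ => fderiv ℝ F (τ, y) (1, 0) + lam τ y * fderiv ℝ F (τ, y) (0, 1) := by
      funext τ; rw [hh, hfst, hsnd]
    rw [hhF]
    have := (hslice.fderiv_apply (hDF _) (1, 0)).add
      (hlam.hasDerivAt.hasDerivWithinAt.mul (hslice.fderiv_apply (hDF _) (0, 1)))
    exact (hasDerivWithinAt_univ.1 this).deriv
  -- along the characteristic `∂_t f` changes at rate `∂_t² f + λ ∂_x ∂_t f`
  have hcurve := ((hasDerivAt_id' s).hasDerivWithinAt.prodMk hX).fderiv_apply (hDF _) (1, 0)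
  have hsplit : ((1 : ℝ), lam s y) = ((1 : ℝ), (0 : ℝ)) + lam s y • ((0 : ℝ), (1 : ℝ)) := by
    simp
  rw [hsplit, map_add, map_smul] at hcurve
  simp only [hfst, hsnd, hht]
  convert hcurve using 1
  change _ = (D2 (1, 0) + lam s y • D2 (0, 1)) (1, 0)
  rw [add_apply, smul_apply, smul_eq_mul, hsymm]
  ring

theorem continuous_deriv_slice_fst {f : ℝ → ℝ → ℝ}
    (hf : ContDiff ℝ 2 (fun p : ℝ × ℝ => f p.1 p.2)) :
    Continuous (fun p : ℝ × ℝ => deriv (fun s => f s p.2) p.1) := by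
  have hF := hf.differentiable (by norm_num)
  simp only [fun p : ℝ × ℝ => (hasDerivAt_slice_fst (hF (p.1, p.2))).deriv]
  exact (hf.continuous_fderiv (by norm_num)).clm_apply continuous_const

theorem abs_deriv_slice_fst_le {f : ℝ → ℝ → ℝ} {t x : ℝ}
    (hf : DifferentiableAt ℝ (fun p : ℝ × ℝ => f p.1 p.2) (t, x)) :
    |deriv (fun s => f s x) t| ≤ ‖fderiv ℝ (fun p : ℝ × ℝ => f p.1 p.2) (t, x)‖ := by
  rw [(hasDerivAt_slice_fst hf).deriv, ← Real.norm_eq_abs]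
  simpa using (fderiv ℝ (fun p : ℝ × ℝ => f p.1 p.2) (t, x)).le_opNorm (1, 0)

theorem exists_eq_forall_mem_Icc_hasDerivWithinAt_of_bounded {v : ℝ → ℝ → ℝ} {K : NNReal} {t L : ℝ}
    (ht : 0 ≤ t) (hlip : ∀ s ∈ Icc 0 t, LipschitzWith K (v s))
    (hcont : ∀ y, ContinuousOn (fun s => v s y) (Icc 0 t))
    (hbdd : ∀ s ∈ Icc 0 t, ∀ y, |v s y| ≤ L) (x : ℝ) :
    ∃ X : ℝ → ℝ, X t = x ∧ ∀ s ∈ Icc 0 t, HasDerivWithinAt X (v s (X s)) (Icc 0 t) s := by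
  have hL : 0 ≤ L := (abs_nonneg _).trans (hbdd t (right_mem_Icc.2 ht) 0)
  have hpl : IsPicardLindelof v (⟨t, right_mem_Icc.2 ht⟩ : Icc 0 t) x
      ⟨L * t, mul_nonneg hL ht⟩ 0 ⟨L, hL⟩ K :=
    { lipschitzOnWith := fun s hs => (hlip s hs).lipschitzOnWith
      continuousOn := fun y _ => hcont y
      norm_le := fun s hs y _ => hbdd s hs y
      mul_max_le := by
        show L * max (t - t) (t - 0) ≤ L * t - 0
        simp [ht] }
  exact hpl.exists_eq_forall_mem_Icc_hasDerivWithinAt₀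

theorem exists_inflow_time {X : ℝ → ℝ} {t a b : ℝ} (ht : 0 ≤ t)
    (hXc : ContinuousOn X (Icc 0 t)) (hXm : MonotoneOn X (Icc 0 t)) (hXt : X t ∈ Icc a b) :
    ∃ s₀ ∈ Icc 0 t, (s₀ = 0 ∨ X s₀ = a) ∧ ∀ s ∈ Icc s₀ t, X s ∈ Icc a b := by
  have hmem : ∀ s₀ ∈ Icc 0 t, a ≤ X s₀ → ∀ s ∈ Icc s₀ t, X s ∈ Icc a b := fun s₀ hs₀ ha s hs =>
    have hs' : s ∈ Icc 0 t := ⟨hs₀.1.trans hs.1, hs.2⟩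
    ⟨ha.trans (hXm hs₀ hs' hs.1), (hXm hs' (right_mem_Icc.2 ht) hs.2).trans hXt.2⟩
  by_cases h0 : a ≤ X 0
  · exact ⟨0, left_mem_Icc.2 ht, Or.inl rfl, hmem 0 (left_mem_Icc.2 ht) h0⟩
  · obtain ⟨s₀, hs₀, hXs₀⟩ := intermediate_value_Icc ht hXc ⟨(not_le.1 h0).le, hXt.1⟩
    exact ⟨s₀, hs₀, Or.inr hXs₀, hmem s₀ hs₀ hXs₀.ge⟩

theorem exists_hasDerivWithinAt_projIcc {lam : ℝ → ℝ → ℝ} {K : NNReal} {t a b : ℝ} (ht : 0 ≤ t)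
    (hab : a ≤ b) (hlip : LipschitzOnWith K (fun p : ℝ × ℝ => lam p.1 p.2) (Icc 0 t ×ˢ Icc a b))
    (x : ℝ) :
    ∃ X : ℝ → ℝ, X t = x ∧
      ∀ s ∈ Icc 0 t, HasDerivWithinAt X (lam s (projIcc a b hab (X s))) (Icc 0 t) s := by
  have hπ : LipschitzWith 1 (fun y => (projIcc a b hab y : ℝ)) := by
    have := (LipschitzWith.subtype_val _).comp (LipschitzWith.projIcc hab)
    rwa [mul_one] at this
  obtain ⟨L, hL⟩ :=
    (isCompact_Icc.prod isCompact_Icc).exists_bound_of_continuousOn hlip.continuousOn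
  refine exists_eq_forall_mem_Icc_hasDerivWithinAt_of_bounded (K := K)
    (v := fun s y => lam s (projIcc a b hab y)) ht (fun s hs => ?_) (fun y => ?_)
    (fun s hs y => hL (s, _) ⟨hs, (projIcc a b hab y).2⟩) x
  · have hslice : LipschitzOnWith K (lam s) (Icc a b) := by
      have := hlip.comp (LipschitzWith.prodMk_left s).lipschitzOnWith (fun y hy => ⟨hs, hy⟩)
      rwa [mul_one] at this
    have := hslice.comp hπ.lipschitzOnWith (fun y _ => (projIcc a b hab y).2) (s := univ)
    rwa [mul_one, lipschitzOnWith_univ] at this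
  · exact hlip.continuousOn.comp (continuousOn_id.prodMk continuousOn_const)
      (fun s hs => ⟨hs, (projIcc a b hab y).2⟩)

theorem exists_backward_characteristic {lam : ℝ → ℝ → ℝ} {K : NNReal}
    (hlip : LipschitzOnWith K (fun p : ℝ × ℝ => lam p.1 p.2) (Ici 0 ×ˢ Icc (-1) 1))
    (hpos : ∀ t ∈ Ici (0 : ℝ), ∀ x ∈ Icc (-1 : ℝ) 1, 0 ≤ lam t x)
    {t x : ℝ} (ht : 0 ≤ t) (hx : x ∈ Icc (-1 : ℝ) 1) :
    ∃ s₀ ∈ Icc 0 t, ∃ X : ℝ → ℝ, X t = x ∧ (s₀ = 0 ∨ X s₀ = -1) ∧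
      (∀ s ∈ Icc s₀ t, X s ∈ Icc (-1 : ℝ) 1) ∧ ContinuousOn X (Icc s₀ t) ∧
      ∀ s ∈ Ico s₀ t, HasDerivWithinAt X (lam s (X s)) (Ici s) s := by
  have hab : (-1 : ℝ) ≤ 1 := by norm_num
  obtain ⟨X, hXt, hX⟩ := exists_hasDerivWithinAt_projIcc ht hab
    (hlip.mono (prod_mono (fun s hs => hs.1) subset_rfl)) x
  have hXc : ContinuousOn X (Icc 0 t) := fun s hs => (hX s hs).continuousWithinAt
  have hXm : MonotoneOn X (Icc 0 t) := by
    refine monotoneOn_of_hasDerivWithinAt_nonneg (convex_Icc 0 t) hXc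
      (fun s hs => (hX s (interior_subset hs)).mono interior_subset) fun s hs => ?_
    exact hpos s (interior_subset hs).1 _ (projIcc _ _ hab _).2
  obtain ⟨s₀, hs₀, hinflow, hXmem⟩ := exists_inflow_time ht hXc hXm (hXt ▸ hx)
  refine ⟨s₀, hs₀, X, hXt, hinflow, hXmem, hXc.mono (Icc_subset_Icc_left hs₀.1), fun s hs => ?_⟩
  have hXs := (hX s ⟨hs₀.1.trans hs.1, hs.2.le⟩).mono_of_mem_nhdsWithin
    (Icc_mem_nhdsGE_of_mem ⟨hs₀.1.trans hs.1, hs.2⟩)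
  rwa [projIcc_of_mem hab (hXmem s (Ico_subset_Icc_self hs))] at hXs

section

open Real

theorem weighted_abs_deriv_le_max_of_characteristic {f lam h : ℝ → ℝ → ℝ} {X : ℝ → ℝ}
    {lm M α S₃ S₄ s₀ t : ℝ} (hlm : 0 < lm) (hM : 0 ≤ M) (hα : 2 * M + 2 ≤ α * lm) (hs₀t : s₀ ≤ t)
    (hf : ContDiff ℝ 2 (fun p : ℝ × ℝ => f p.1 p.2))
    (hh : ∀ t x, h t x = deriv (fun s => f s x) t + lam t x * deriv (fun y => f t y) x)
    (hXc : ContinuousOn X (Icc s₀ t))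
    (hX : ∀ s ∈ Ico s₀ t, HasDerivWithinAt X (lam s (X s)) (Ici s) s)
    (hlb : ∀ s ∈ Ico s₀ t, lm ≤ lam s (X s))
    (hlamt : ∀ s ∈ Ico s₀ t, DifferentiableAt ℝ (fun τ => lam τ (X s)) s ∧
      |deriv (fun τ => lam τ (X s)) s| ≤ M * lam s (X s))
    (hS₃ : ∀ s ∈ Ico s₀ t, exp (-α * X s) * |h s (X s)| ≤ S₃)
    (hS₄ : ∀ s ∈ Ico s₀ t, exp (-α * X s) * |deriv (fun τ => h τ (X s)) s| ≤ S₄) :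
    exp (-α * X t) * |deriv (fun s => f s (X t)) t| ≤
      max (exp (-α * X s₀) * |deriv (fun s => f s (X s₀)) s₀|) ((S₄ + M * S₃) / (M + 2)) := by
  set q : ℝ → ℝ := fun s => deriv (fun τ => lam τ (X s)) s / lam s (X s)
  set u : ℝ → ℝ := fun s => exp (-α * X s) * deriv (fun σ => f σ (X s)) s
  have hq : ∀ s ∈ Ico s₀ t, |q s| ≤ M := fun s hs => by
    have hpos := hlm.trans_le (hlb s hs)
    rw [abs_div, abs_of_pos hpos, div_le_iff₀ hpos]
    exact (hlamt s hs).2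
  have hα₀ : 0 ≤ α := by nlinarith
  have hu := abs_le_max_of_hasDerivWithinAt_damped (u := u) (κ := M + 2) (B := S₄ + M * S₃)
    (c := fun s => α * lam s (X s) - q s)
    (r := fun s => exp (-α * X s) * (deriv (fun τ => h τ (X s)) s - q s * h s (X s)))
    hs₀t (by linarith) ?cont ?deriv ?damping ?forcing
  · simpa only [u, abs_mul, abs_of_pos (exp_pos _)] using hu
  case cont =>
    exact (continuous_exp.comp_continuousOn (hXc.const_smul (-α))).mul
      ((continuous_deriv_slice_fst hf).comp_continuousOn (continuousOn_id.prodMk hXc))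
  case deriv =>
    intro s hs
    have hpos := hlm.trans_le (hlb s hs)
    have hg := hasDerivWithinAt_deriv_along_characteristic hf hh (hlamt s hs).1 (hX s hs)
    refine (((hX s hs).const_mul (-α)).exp.mul hg).congr_deriv ?_
    -- eliminate `∂_x f = (h - ∂_t f) / λ`
    simp only [u, q, hh s (X s)]
    field_simp
    ring
  case damping =>
    intro s hs
    have := mul_le_mul_of_nonneg_left (hlb s hs) hα₀
    linarith [(abs_le.1 (hq s hs)).2]
  case forcing =>
    intro s hs
    calc |exp (-α * X s) * (deriv (fun τ => h τ (X s)) s - q s * h s (X s))|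
        ≤ exp (-α * X s) * |deriv (fun τ => h τ (X s)) s| +
            |q s| * (exp (-α * X s) * |h s (X s)|) := by
          rw [abs_mul, abs_of_pos (exp_pos _)]
          nlinarith [abs_sub (deriv (fun τ => h τ (X s)) s) (q s * h s (X s)),
            abs_mul (q s) (h s (X s)), exp_pos (-α * X s)]
      _ ≤ S₄ + M * S₃ := add_le_add (hS₄ s hs)
          (mul_le_mul (hq s hs) (hS₃ s hs) (by positivity) hM)

theorem exp_mul_abs_le_iSup {ι : Type*} {α C : ℝ} (hα : 0 ≤ α) {y g : ι → ℝ}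
    (hy : ∀ i, y i ∈ Icc (-1 : ℝ) 1) (hg : ∀ i, |g i| ≤ C) (i : ι) :
    exp (-α * y i) * |g i| ≤ ⨆ j, exp (-α * y j) * |g j| := by
  refine le_ciSup (f := fun j => exp (-α * y j) * |g j|)
    ⟨exp α * C, forall_mem_range.2 fun j => ?_⟩ i
  exact mul_le_mul (exp_le_exp.2 (by nlinarith [(hy j).1])) (hg j) (abs_nonneg _) (exp_pos _).le

theorem weighted_abs_deriv_le_of_bounds {f lam h : ℝ → ℝ → ℝ} {K : NNReal}
    {lm M α S₁ S₂ S₃ S₄ : ℝ} (hlm : 0 < lm) (hM : 0 ≤ M) (hα : 2 * M + 2 ≤ α * lm)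
    (hlip : LipschitzOnWith K (fun p : ℝ × ℝ => lam p.1 p.2) (Ici 0 ×ˢ Icc (-1) 1))
    (hlb : ∀ t ∈ Ici (0 : ℝ), ∀ x ∈ Icc (-1 : ℝ) 1, lm ≤ lam t x)
    (hlamt : ∀ t ∈ Ici (0 : ℝ), ∀ x ∈ Icc (-1 : ℝ) 1,
      DifferentiableAt ℝ (fun s => lam s x) t ∧ |deriv (fun s => lam s x) t| ≤ M * lam t x)
    (hf : ContDiff ℝ 2 (fun p : ℝ × ℝ => f p.1 p.2))
    (hh : ∀ t x, h t x = deriv (fun s => f s x) t + lam t x * deriv (fun y => f t y) x)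
    (hS₁ : ∀ x ∈ Icc (-1 : ℝ) 1, exp (-α * x) * |deriv (fun s => f s x) 0| ≤ S₁)
    (hS₂ : ∀ t ∈ Ici (0 : ℝ), exp (-α * (-1)) * |deriv (fun s => f s (-1)) t| ≤ S₂)
    (hS₃ : ∀ t ∈ Ici (0 : ℝ), ∀ x ∈ Icc (-1 : ℝ) 1, exp (-α * x) * |h t x| ≤ S₃)
    (hS₄ : ∀ t ∈ Ici (0 : ℝ), ∀ x ∈ Icc (-1 : ℝ) 1,
      exp (-α * x) * |deriv (fun s => h s x) t| ≤ S₄)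
    {t x : ℝ} (ht : 0 ≤ t) (hx : x ∈ Icc (-1 : ℝ) 1) :
    exp (-α * x) * |deriv (fun s => f s x) t| ≤ S₁ + S₂ + S₃ + S₄ := by
  have h0 : (0 : ℝ) ∈ Icc (-1 : ℝ) 1 := by norm_num
  have hS₁₀ : 0 ≤ S₁ := le_trans (by positivity) (hS₁ 0 h0)
  have hS₂₀ : 0 ≤ S₂ := le_trans (by positivity) (hS₂ 0 self_mem_Ici)
  have hS₃₀ : 0 ≤ S₃ := le_trans (by positivity) (hS₃ 0 self_mem_Ici 0 h0)
  have hS₄₀ : 0 ≤ S₄ := le_trans (by positivity) (hS₄ 0 self_mem_Ici 0 h0)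
  obtain ⟨s₀, hs₀, X, hXt, hinflow, hXmem, hXc, hX⟩ := exists_backward_characteristic hlip
    (fun s hs y hy => hlm.le.trans (hlb s hs y hy)) ht hx
  have hmem : ∀ s ∈ Ico s₀ t, s ∈ Ici (0 : ℝ) ∧ X s ∈ Icc (-1 : ℝ) 1 :=
    fun s hs => ⟨hs₀.1.trans hs.1, hXmem s (Ico_subset_Icc_self hs)⟩
  have key := weighted_abs_deriv_le_max_of_characteristic hlm hM hα hs₀.2 hf hh hXc hX
    (fun s hs => hlb s (hmem s hs).1 _ (hmem s hs).2)
    (fun s hs => hlamt s (hmem s hs).1 _ (hmem s hs).2)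
    (fun s hs => hS₃ s (hmem s hs).1 _ (hmem s hs).2)
    (fun s hs => hS₄ s (hmem s hs).1 _ (hmem s hs).2)
  have hinit : exp (-α * X s₀) * |deriv (fun s => f s (X s₀)) s₀| ≤ S₁ + S₂ := by
    rcases hinflow with rfl | hXs₀
    · linarith [hS₁ _ (hXmem 0 (left_mem_Icc.2 hs₀.2))]
    · rw [hXs₀]
      linarith [hS₂ s₀ hs₀.1]
  rw [hXt] at key
  refine key.trans (max_le (by linarith) ?_)
  rw [div_le_iff₀ (by linarith)]
  nlinarith [mul_nonneg hM hS₁₀, mul_nonneg hM hS₂₀, mul_nonneg hM hS₄₀]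

end

/-- Weighted `L^∞` estimate for the time derivative of a solution of
the transport inflow problem `∂_t f + λ∂_x f = h` on `I = (−1,1)` with inflow boundary
`{−1}`. With `M` bounding `|∂_tλ/λ|`, `α = (2M+2)/λ_m` and `w(x) = e^{−αx}`, there is a
universal constant `C` (independent of `f, λ, h`) with
`sup w|∂_t f| ≤ C (sup_x w|∂_tf(0,x)| + sup_t w(−1)|∂_tf(t,−1)| + sup w|h| + sup w|∂_th|)`. -/
theorem stmt6 :
    ∃ C : ℝ, 0 < C ∧
      ∀ (lm M : ℝ) (lam f h : ℝ → ℝ → ℝ) (K : NNReal),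
        0 < lm → 0 ≤ M →
        LipschitzOnWith K (fun p : ℝ × ℝ => lam p.1 p.2)
          (Set.Ici (0 : ℝ) ×ˢ Set.Icc (-1 : ℝ) 1) →
        (∀ t ∈ Set.Ici (0 : ℝ), ∀ x ∈ Set.Icc (-1 : ℝ) 1, lm ≤ lam t x) →
        (∀ t ∈ Set.Ici (0 : ℝ), ∀ x ∈ Set.Icc (-1 : ℝ) 1,
          DifferentiableAt ℝ (fun s => lam s x) t ∧
          |deriv (fun s => lam s x) t| ≤ M * lam t x) →
        ContDiff ℝ 2 (fun p : ℝ × ℝ => f p.1 p.2) →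
        (∃ Mf : ℝ, ∀ t ∈ Set.Ici (0 : ℝ), ∀ x ∈ Set.Icc (-1 : ℝ) 1,
          ‖fderiv ℝ (fun p : ℝ × ℝ => f p.1 p.2) (t, x)‖ ≤ Mf ∧
          ‖fderiv ℝ (fderiv ℝ (fun p : ℝ × ℝ => f p.1 p.2)) (t, x)‖ ≤ Mf) →
        (∀ t x : ℝ, h t x = deriv (fun s => f s x) t + lam t x * deriv (fun y => f t y) x) →
        (∃ Mh : ℝ, ∀ t ∈ Set.Ici (0 : ℝ), ∀ x ∈ Set.Icc (-1 : ℝ) 1,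
          |h t x| ≤ Mh ∧ |deriv (fun s => h s x) t| ≤ Mh) →
        ∀ t ∈ Set.Ici (0 : ℝ), ∀ x ∈ Set.Icc (-1 : ℝ) 1,
          Real.exp (-((2 * M + 2) / lm) * x) * |deriv (fun s => f s x) t| ≤
            C * ((⨆ y : Set.Icc (-1 : ℝ) 1,
                    Real.exp (-((2 * M + 2) / lm) * (y : ℝ)) * |deriv (fun s => f s (y : ℝ)) 0|)
              + (⨆ s : Set.Ici (0 : ℝ),
                    Real.exp (-((2 * M + 2) / lm) * (-1 : ℝ)) * |deriv (fun τ => f τ (-1)) (s : ℝ)|)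
              + (⨆ q : Set.Ici (0 : ℝ) × Set.Icc (-1 : ℝ) 1,
                    Real.exp (-((2 * M + 2) / lm) * (q.2 : ℝ)) * |h (q.1 : ℝ) (q.2 : ℝ)|)
              + (⨆ q : Set.Ici (0 : ℝ) × Set.Icc (-1 : ℝ) 1,
                    Real.exp (-((2 * M + 2) / lm) * (q.2 : ℝ)) *
                      |deriv (fun s => h s (q.2 : ℝ)) (q.1 : ℝ)|)) := by
  refine ⟨1, one_pos, ?_⟩
  intro lm M lam f h K hlm hM hlip hlb hlamt hf ⟨Mf, hMf⟩ hh ⟨Mh, hMh⟩ t ht x hx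
  have hα₀ : 0 ≤ (2 * M + 2) / lm := by positivity
  have hft : ∀ s ∈ Ici (0 : ℝ), ∀ y ∈ Icc (-1 : ℝ) 1, |deriv (fun τ => f τ y) s| ≤ Mf :=
    fun s hs y hy =>
      (abs_deriv_slice_fst_le (hf.differentiable (by norm_num) _)).trans (hMf s hs y hy).1
  have hneg : (-1 : ℝ) ∈ Icc (-1 : ℝ) 1 := by norm_num
  rw [one_mul]
  refine weighted_abs_deriv_le_of_bounds hlm hM (div_mul_cancel₀ _ hlm.ne').ge hlip hlb hlamt hf
    hh (fun y hy => ?_) (fun s hs => ?_) (fun s hs y hy => ?_) (fun s hs y hy => ?_) ht hx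
  · exact exp_mul_abs_le_iSup hα₀ (fun y : Icc (-1 : ℝ) 1 => y.2)
      (fun y => hft 0 self_mem_Ici y y.2) ⟨y, hy⟩
  · exact exp_mul_abs_le_iSup hα₀ (y := fun _ : Ici (0 : ℝ) => -1) (fun _ => hneg)
      (fun s => hft s s.2 (-1) hneg) ⟨s, hs⟩
  · exact exp_mul_abs_le_iSup hα₀ (fun q : Ici (0 : ℝ) × Icc (-1 : ℝ) 1 => q.2.2)
      (fun q => (hMh q.1 q.1.2 q.2 q.2.2).1) (⟨s, hs⟩, ⟨y, hy⟩)
  · exact exp_mul_abs_le_iSup hα₀ (fun q : Ici (0 : ℝ) × Icc (-1 : ℝ) 1 => q.2.2)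
      (fun q => (hMh q.1 q.1.2 q.2 q.2.2).2) (⟨s, hs⟩, ⟨y, hy⟩)
end

section
/- Let Ω̄ = [−1,1] × D̄ with D = B(0,1) the unit disk, lateral boundary γ₀ = [−1,1] × ∂D. Let u : [0,∞)×Ω̄ → ℝ³ be Lipschitz with u₁ ≥ c₁ > 0 and u·ν = 0 on γ₀ (i.e. u(τ,y)·(0,y₂,y₃) = 0 when y₂²+y₃² = 1). Let f : [0,∞)×Ω̄ → ℝ be a C¹ solution of ∂_t f + u·∇f = h on [0,∞)×Ω̄. If f(0,x) = 0 for all x ∈ γ₀, f(t,x) = 0 for all t ≥ 0 and all x in the inflow lateral edge {x₁ = −1} ∩ γ₀, and h(t,x) = 0 for all t ≥ 0 and x ∈ γ₀, then f(t,x) = 0 for all t ≥ 0 and x ∈ γ₀. -/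
open Set

/-- Partial derivative in the `i`-th coordinate direction of a scalar function on `ℝ³`. -/
noncomputable def pd (i : Fin 3) (g : (Fin 3 → ℝ) → ℝ) (x : Fin 3 → ℝ) : ℝ :=
  deriv (fun s => g (Function.update x i s)) (x i)

/-- The closed finite circular pipe `Ω̄ = [−1,1] × D̄`, `D = B(0,1) ⊂ ℝ²`. -/
def circPipe : Set (Fin 3 → ℝ) :=
  {y | y 0 ∈ Set.Icc (-1 : ℝ) 1 ∧ (y 1) ^ 2 + (y 2) ^ 2 ≤ 1}

/-!
Maximum principle along characteristics. Let `(t₁, y₁)` maximise `f² e^{-t}` over `[0,T] × γ₀`.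
If `t₁ = 0` or `y₁` lies on the inflow edge, `f(t₁, y₁) = 0` by the data. Otherwise, since
`u₁ > 0` and `u·ν = 0`, the backward characteristic direction `-(1, u)` points into `[0,T] × γ₀`
(it is realised by a helix on the cylinder), so the derivative of `f² e^{-t}` along `(1, u)` is
`≥ 0` at the maximum. By the equation with `h = 0` this derivative equals `-f² e^{-t}`, hence
`f(t₁, y₁) = 0`, and the maximum is `0`.
-/

open Filter Topology

def lateralBoundary : Set (Fin 3 → ℝ) :=
  {y | y 0 ∈ Icc (-1 : ℝ) 1 ∧ y 1 ^ 2 + y 2 ^ 2 = 1}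

lemma lateralBoundary_subset_circPipe : lateralBoundary ⊆ circPipe :=
  fun _ hy => ⟨hy.1, hy.2.le⟩

lemma isCompact_lateralBoundary : IsCompact lateralBoundary := by
  have hclosed : IsClosed lateralBoundary :=
    (isClosed_Icc.preimage (continuous_apply 0)).inter
      (isClosed_eq (by fun_prop) continuous_const)
  refine (isCompact_closedBall (0 : Fin 3 → ℝ) 1).of_isClosed_subset hclosed fun y hy => ?_
  obtain ⟨⟨h0l, h0u⟩, hcirc⟩ := hy
  rw [mem_closedBall_zero_iff, pi_norm_le_iff_of_nonneg zero_le_one]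
  intro i
  rw [Real.norm_eq_abs, abs_le]
  fin_cases i
  · exact ⟨h0l, h0u⟩
  · show -1 ≤ y 1 ∧ y 1 ≤ 1
    constructor <;> nlinarith [sq_nonneg (y 2)]
  · show -1 ≤ y 2 ∧ y 2 ≤ 1
    constructor <;> nlinarith [sq_nonneg (y 1)]

theorem mem_posTangentConeAt_of_hasDerivWithinAt {E : Type*} [NormedAddCommGroup E]
    [NormedSpace ℝ E] {γ : ℝ → E} {v x : E} {s : Set E}
    (hγ : HasDerivWithinAt γ v (Ioi 0) 0) (h0 : γ 0 = x) (hs : ∀ᶠ τ in 𝓝[>] 0, γ τ ∈ s) :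
    v ∈ posTangentConeAt s x := by
  subst h0
  refine mem_tangentConeAt_of_seq (𝓝[>] 0) (fun τ => τ⁻¹.toNNReal) (fun τ => γ τ - γ 0)
    ?_ (by simpa using hs) ?_
  · exact tendsto_sub_nhds_zero_iff.mpr hγ.continuousWithinAt.tendsto
  · have hslope := (hasDerivWithinAt_iff_tendsto_slope.mp hγ).mono_left
      (nhdsWithin_mono _ fun τ (hτ : 0 < τ) => ⟨hτ, hτ.ne'⟩)
    refine hslope.congr' ?_
    filter_upwards [self_mem_nhdsWithin] with τ (hτ : 0 < τ)
    rw [slope_def_module, NNReal.smul_def, Real.coe_toNNReal _ (inv_nonneg.mpr hτ.le), sub_zero]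

noncomputable def helix (y : Fin 3 → ℝ) (c ω τ : ℝ) : Fin 3 → ℝ :=
  ![y 0 + c * τ, y 1 * Real.cos (ω * τ) - y 2 * Real.sin (ω * τ),
    y 1 * Real.sin (ω * τ) + y 2 * Real.cos (ω * τ)]

lemma helix_zero (y : Fin 3 → ℝ) (c ω : ℝ) : helix y c ω 0 = y := by
  ext i; fin_cases i <;> simp [helix]

lemma hasDerivAt_helix (y : Fin 3 → ℝ) (c ω : ℝ) :
    HasDerivAt (helix y c ω) ![c, -(y 2 * ω), y 1 * ω] 0 := by
  have hangle := (hasDerivAt_id' (0 : ℝ)).const_mul ω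
  rw [hasDerivAt_pi]
  intro i
  fin_cases i
  · simpa [helix] using ((hasDerivAt_id' (0 : ℝ)).const_mul c).const_add (y 0)
  · simpa [helix] using (hangle.cos.const_mul (y 1)).fun_sub (hangle.sin.const_mul (y 2))
  · simpa [helix] using (hangle.sin.const_mul (y 1)).fun_add (hangle.cos.const_mul (y 2))

lemma helix_sq_add_sq (y : Fin 3 → ℝ) (c ω τ : ℝ) :
    helix y c ω τ 1 ^ 2 + helix y c ω τ 2 ^ 2 = y 1 ^ 2 + y 2 ^ 2 := by
  simp only [helix, Matrix.cons_val_one, Matrix.cons_val_two, Matrix.cons_val_zero,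
    Matrix.head_cons, Matrix.tail_cons]
  linear_combination (y 1 ^ 2 + y 2 ^ 2) * Real.sin_sq_add_cos_sq (ω * τ)

lemma neg_mem_posTangentConeAt_Icc_prod_lateralBoundary {T t : ℝ} {y v : Fin 3 → ℝ}
    (ht : 0 < t) (htT : t ≤ T) (hy : y ∈ lateralBoundary) (hy0 : -1 < y 0) (hv0 : 0 ≤ v 0)
    (hv : v 1 * y 1 + v 2 * y 2 = 0) :
    -((1 : ℝ), v) ∈ posTangentConeAt (Icc 0 T ×ˢ lateralBoundary) (t, y) := by
  set ω := v 1 * y 2 - v 2 * y 1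
  have hderiv : HasDerivAt (fun τ => (t - τ, helix y (-v 0) ω τ)) (-((1 : ℝ), v)) 0 := by
    convert ((hasDerivAt_id' (0 : ℝ)).const_sub t).prodMk (hasDerivAt_helix y (-v 0) ω) using 1
    refine Prod.ext rfl (funext fun i => ?_)
    fin_cases i
    · simp
    · simp only [Prod.snd_neg, Pi.neg_apply]
      show -v 1 = -(y 2 * ω)
      linear_combination v 1 * hy.2 - y 1 * hv
    · show -v 2 = y 1 * ω
      linear_combination v 2 * hy.2 - y 2 * hv
  refine mem_posTangentConeAt_of_hasDerivWithinAt hderiv.hasDerivWithinAt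
    (by simp [helix_zero]) ?_
  have hsmall : 0 < min t ((y 0 + 1) / (v 0 + 1)) := lt_min ht (by apply div_pos <;> linarith)
  filter_upwards [Ioo_mem_nhdsGT hsmall] with τ ⟨hτ0, hτ⟩
  have hτt := hτ.trans_le (min_le_left _ _)
  have hτy : τ * (v 0 + 1) < y 0 + 1 :=
    (lt_div_iff₀ (by linarith)).mp (hτ.trans_le (min_le_right _ _))
  refine ⟨⟨by linarith, by linarith⟩, ⟨?_, ?_⟩, by rw [helix_sq_add_sq, hy.2]⟩
  · show -1 ≤ y 0 + -v 0 * τ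
    nlinarith
  · show y 0 + -v 0 * τ ≤ 1
    nlinarith [hy.1.2]

lemma fderiv_apply_one_eq_deriv_add_sum_pd {g : ℝ → (Fin 3 → ℝ) → ℝ} {t : ℝ}
    {y : Fin 3 → ℝ} (hg : DifferentiableAt ℝ (fun q : ℝ × (Fin 3 → ℝ) => g q.1 q.2) (t, y))
    (v : Fin 3 → ℝ) :
    fderiv ℝ (fun q : ℝ × (Fin 3 → ℝ) => g q.1 q.2) (t, y) (1, v) =
      deriv (fun s => g s y) t + ∑ i, v i * pd i (g t) y := by
  set L := fderiv ℝ (fun q : ℝ × (Fin 3 → ℝ) => g q.1 q.2) (t, y)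
  have hL : HasFDerivAt _ L (t, y) := hg.hasFDerivAt
  have htime : deriv (fun s => g s y) t = L (1, 0) := by
    have hcurve := (hasDerivAt_id' t).prodMk (hasDerivAt_const t y)
    exact (hL.comp_hasDerivAt t hcurve).deriv
  have hspace (i : Fin 3) : pd i (g t) y = L (0, Pi.single i 1) := by
    rw [← Function.update_eq_self i y] at hL
    exact (hL.comp_hasDerivAt (y i)
      ((hasDerivAt_const (y i) t).prodMk (hasDerivAt_update y i (y i)))).deriv
  have hdecomp : ((1 : ℝ), v) = (1, 0) + ∑ i, v i • ((0 : ℝ), (Pi.single i 1 : Fin 3 → ℝ)) := by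
    refine Prod.ext (by simp [Prod.fst_sum]) (funext fun j => ?_)
    simp [Prod.snd_sum, Finset.sum_apply, Pi.single_apply]
  simp only [hdecomp, map_add, map_sum, map_smul, smul_eq_mul, htime, hspace]

lemma eq_zero_of_sq_mul_exp_nonpos {a b : ℝ} (h : a ^ 2 * Real.exp b ≤ 0) : a = 0 :=
  pow_eq_zero_iff two_ne_zero |>.mp
    (le_antisymm (nonpos_of_mul_nonpos_left h (Real.exp_pos _)) (sq_nonneg _))

lemma eq_zero_of_isMaxOn_sq_mul_exp {f : ℝ → (Fin 3 → ℝ) → ℝ} {T t : ℝ} {y w : Fin 3 → ℝ}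
    (hf : DifferentiableAt ℝ (fun q : ℝ × (Fin 3 → ℝ) => f q.1 q.2) (t, y))
    (hmax : IsMaxOn (fun q : ℝ × (Fin 3 → ℝ) => f q.1 q.2 ^ 2 * Real.exp (-q.1))
      (Icc 0 T ×ˢ lateralBoundary) (t, y))
    (ht : 0 < t) (htT : t ≤ T) (hy : y ∈ lateralBoundary) (hy0 : -1 < y 0) (hw0 : 0 ≤ w 0)
    (hw : w 1 * y 1 + w 2 * y 2 = 0)
    (htransport : deriv (fun s => f s y) t + ∑ i, w i * pd i (f t) y = 0) :
    f t y = 0 := by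
  have hΦ := (hf.hasFDerivAt.pow 2).mul (hasFDerivAt_fst (p := (t, y))).neg.exp
  have hnonpos := hmax.localize.hasFDerivWithinAt_nonpos hΦ.hasFDerivWithinAt
    (neg_mem_posTangentConeAt_Icc_prod_lateralBoundary ht htT hy hy0 hw0 hw)
  simp only [map_neg, add_apply, smul_apply, fderiv_apply_one_eq_deriv_add_sum_pd hf,
    htransport, Pi.neg_apply, neg_apply, ContinuousLinearMap.coe_fst', smul_eq_mul, mul_neg,
    mul_one, Nat.add_one_sub_one, pow_one, nsmul_eq_mul, Nat.cast_ofNat, mul_zero, add_zero,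
    neg_neg] at hnonpos
  exact eq_zero_of_sq_mul_exp_nonpos hnonpos

theorem stmt12_general (c₁ : ℝ) (hc₁ : 0 < c₁) (u : ℝ → (Fin 3 → ℝ) → Fin 3 → ℝ)
    (hu1 : ∀ t ∈ Set.Ici (0 : ℝ), ∀ y ∈ circPipe, c₁ ≤ u t y 0)
    (hν : ∀ t ∈ Set.Ici (0 : ℝ), ∀ y ∈ circPipe, (y 1) ^ 2 + (y 2) ^ 2 = 1 →
      u t y 1 * y 1 + u t y 2 * y 2 = 0)
    (f h : ℝ → (Fin 3 → ℝ) → ℝ)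
    (hf : ContDiff ℝ 1 (fun q : ℝ × (Fin 3 → ℝ) => f q.1 q.2))
    (hpde : ∀ t ∈ Set.Ici (0 : ℝ), ∀ y ∈ circPipe,
      deriv (fun s => f s y) t + ∑ i : Fin 3, u t y i * pd i (f t) y = h t y)
    (hinit : ∀ y ∈ circPipe, (y 1) ^ 2 + (y 2) ^ 2 = 1 → f 0 y = 0)
    (hedge : ∀ t ∈ Set.Ici (0 : ℝ), ∀ y ∈ circPipe,
      y 0 = -1 → (y 1) ^ 2 + (y 2) ^ 2 = 1 → f t y = 0)
    (hh : ∀ t ∈ Set.Ici (0 : ℝ), ∀ y ∈ circPipe, (y 1) ^ 2 + (y 2) ^ 2 = 1 → h t y = 0) :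
    ∀ t ∈ Set.Ici (0 : ℝ), ∀ y ∈ circPipe, (y 1) ^ 2 + (y 2) ^ 2 = 1 → f t y = 0 := by
  intro T hT y hy hcirc
  have hyK : (T, y) ∈ Icc 0 T ×ˢ lateralBoundary := ⟨⟨hT, le_rfl⟩, hy.1, hcirc⟩
  have hΦ : Continuous fun q : ℝ × (Fin 3 → ℝ) => f q.1 q.2 ^ 2 * Real.exp (-q.1) :=
    (hf.continuous.pow 2).mul continuous_fst.neg.rexp
  obtain ⟨⟨t₁, y₁⟩, ⟨ht₁, hy₁⟩, hmax⟩ :=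
    (isCompact_Icc.prod isCompact_lateralBoundary).exists_isMaxOn ⟨_, hyK⟩ hΦ.continuousOn
  have hy₁pipe := lateralBoundary_subset_circPipe hy₁
  have hzero : f t₁ y₁ = 0 := by
    rcases ht₁.1.eq_or_lt with rfl | ht₁pos
    · exact hinit y₁ hy₁pipe hy₁.2
    rcases hy₁.1.1.eq_or_lt with hinflow | hy₁0
    · exact hedge t₁ ht₁.1 y₁ hy₁pipe hinflow.symm hy₁.2
    refine eq_zero_of_isMaxOn_sq_mul_exp (hf.differentiable one_ne_zero _) hmax ht₁pos ht₁.2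
      hy₁ hy₁0 (hc₁.le.trans (hu1 t₁ ht₁.1 y₁ hy₁pipe)) (hν t₁ ht₁.1 y₁ hy₁pipe hy₁.2) ?_
    rw [hpde t₁ ht₁.1 y₁ hy₁pipe]
    exact hh t₁ ht₁.1 y₁ hy₁pipe hy₁.2
  exact eq_zero_of_sq_mul_exp_nonpos (by simpa [hzero] using hmax hyK)

/-- In the circular pipe, let `u` be Lipschitz with `u₁ ≥ c₁ > 0` and
`u·ν = 0` on the lateral boundary `γ₀`, and let `f` be a `C¹` solution of
`∂_t f + u·∇f = h`. If `f(0,·) = 0` on `γ₀`, `f = 0` on the inflow lateral edge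
`{x₁ = −1} ∩ γ₀` for all times, and `h = 0` on `γ₀` for all times, then `f = 0`
on `γ₀` for all times. -/
theorem stmt12 (c₁ : ℝ) (hc₁ : 0 < c₁) (u : ℝ → (Fin 3 → ℝ) → Fin 3 → ℝ) (K : NNReal)
    (hulip : LipschitzOnWith K (fun p : ℝ × (Fin 3 → ℝ) => u p.1 p.2)
      (Set.Ici (0 : ℝ) ×ˢ circPipe))
    (hu1 : ∀ t ∈ Set.Ici (0 : ℝ), ∀ y ∈ circPipe, c₁ ≤ u t y 0)
    (hν : ∀ t ∈ Set.Ici (0 : ℝ), ∀ y ∈ circPipe, (y 1) ^ 2 + (y 2) ^ 2 = 1 →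
      u t y 1 * y 1 + u t y 2 * y 2 = 0)
    (f h : ℝ → (Fin 3 → ℝ) → ℝ)
    (hf : ContDiff ℝ 1 (fun q : ℝ × (Fin 3 → ℝ) => f q.1 q.2))
    (hpde : ∀ t ∈ Set.Ici (0 : ℝ), ∀ y ∈ circPipe,
      deriv (fun s => f s y) t + ∑ i : Fin 3, u t y i * pd i (f t) y = h t y)
    (hinit : ∀ y ∈ circPipe, (y 1) ^ 2 + (y 2) ^ 2 = 1 → f 0 y = 0)
    (hedge : ∀ t ∈ Set.Ici (0 : ℝ), ∀ y ∈ circPipe,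
      y 0 = -1 → (y 1) ^ 2 + (y 2) ^ 2 = 1 → f t y = 0)
    (hh : ∀ t ∈ Set.Ici (0 : ℝ), ∀ y ∈ circPipe, (y 1) ^ 2 + (y 2) ^ 2 = 1 → h t y = 0) :
    ∀ t ∈ Set.Ici (0 : ℝ), ∀ y ∈ circPipe, (y 1) ^ 2 + (y 2) ^ 2 = 1 → f t y = 0 :=
  stmt12_general c₁ hc₁ u hu1 hν f h hf hpde hinit hedge hh
end
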